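/- Let M be a non-degenerate Orlicz function satisfying the Δ₂ condition at zero, and suppose that for some p ∈ (1,2], limsup_{t↓0} M(t)/t^p = ∞. Then there is no non-trivial Fréchet differentiable bump b on ℓ_M satisfying, at every point x ∈ ℓ_M, the estimate b(x+h) = b(x) + ⟨b'(x), h⟩ + O(‖h‖^p) as h → 0 (i.e. for every x there exist C > 0 and r > 0 with |b(x+h) − b(x) − ⟨b'(x), h⟩| ≤ C‖h‖^p whenever ‖h‖ ≤ r). -/

import Mathlib

open Filter Topology

/-- `σ_M(x) = Σ_{n} M(|x_n|) ∈ [0,∞]`. -/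
noncomputable def sigmaM (M : ℝ → ℝ) (x : ℕ → ℝ) : ENNReal :=
  ∑' n, ENNReal.ofReal (M |x n|)

/-- Membership in the Orlicz sequence space `ℓ_M`: `x` is a bounded sequence with
`σ_M(x/ρ) < ∞` for some `ρ > 0`. -/
def MemLM (M : ℝ → ℝ) (x : ℕ → ℝ) : Prop :=
  (∃ A : ℝ, ∀ n, |x n| ≤ A) ∧ ∃ ρ > 0, sigmaM M (fun n => x n / ρ) ≠ ⊤

/-- The Luxemburg norm `‖x‖ = inf {ρ > 0 : σ_M(x/ρ) ≤ 1}`. -/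
noncomputable def luxNorm (M : ℝ → ℝ) (x : ℕ → ℝ) : ℝ :=
  sInf {ρ : ℝ | 0 < ρ ∧ sigmaM M (fun n => x n / ρ) ≤ 1}

/-- An Orlicz function: continuous, non-decreasing, convex on `[0,∞)`, `M(0) = 0` and
`M(t) → ∞` as `t → ∞`. -/
structure IsOrliczFunction (M : ℝ → ℝ) : Prop where
  continuousOn : ContinuousOn M (Set.Ici 0)
  monotoneOn : MonotoneOn M (Set.Ici 0)
  convexOn : ConvexOn ℝ (Set.Ici 0) M
  map_zero : M 0 = 0
  tendsto_atTop : Tendsto M atTop atTop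

/-- `M` satisfies the `Δ₂` condition at zero: `liminf_{t↓0} M(t)/M(2t) > 0`. -/
def Delta2Zero (M : ℝ → ℝ) : Prop :=
  0 < liminf (fun t => M t / M (2 * t)) (𝓝[>] (0 : ℝ))

/-- `g_a(x) = Σ_n a_n M(|x_n|)`. -/
noncomputable def gA (M : ℝ → ℝ) (a : ℕ → ℝ) (x : ℕ → ℝ) : ℝ :=
  ∑' n, a n * M |x n|

section AuxOrlicz

variable {M : ℝ → ℝ}

lemma M_mono (hM : IsOrliczFunction M) {a b : ℝ} (ha : 0 ≤ a) (hab : a ≤ b) :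
    M a ≤ M b :=
  hM.monotoneOn (Set.mem_Ici.2 ha) (Set.mem_Ici.2 (ha.trans hab)) hab

lemma M_nonneg (hM : IsOrliczFunction M) {t : ℝ} (ht : 0 ≤ t) : 0 ≤ M t := by
  have := M_mono hM (le_refl 0) ht
  rw [hM.map_zero] at this; exact this

lemma M_scale (hM : IsOrliczFunction M) {θ t : ℝ} (hθ : 0 ≤ θ) (hθ1 : θ ≤ 1)
    (ht : 0 ≤ t) : M (θ * t) ≤ θ * M t := by
  have h := hM.convexOn.2 (Set.mem_Ici.2 ht) (Set.mem_Ici.2 (le_refl (0:ℝ)))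
    hθ (by linarith : (0:ℝ) ≤ 1 - θ) (by ring)
  simp only [smul_eq_mul, mul_zero, add_zero, hM.map_zero] at h
  linarith [h]

lemma M_double (hM : IsOrliczFunction M) {t : ℝ} (ht : 0 ≤ t) :
    2 * M t ≤ M (2 * t) := by
  have h := M_scale hM (by norm_num : (0:ℝ) ≤ 1/2) (by norm_num) (by linarith : 0 ≤ 2 * t)
  have : (1/2 : ℝ) * (2 * t) = t := by ring
  rw [this] at h; linarith

lemma M_strict (hM : IsOrliczFunction M) (hnd : ∀ t > (0:ℝ), 0 < M t)
    {a b : ℝ} (ha : 0 ≤ a) (hab : a < b) : M a < M b := by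
  rcases eq_or_lt_of_le ha with h0 | h0
  · rw [← h0, hM.map_zero]; exact hnd b (h0 ▸ hab)
  · have hb : 0 < b := h0.trans hab
    have h1 : M a = M ((a/b) * b) := by rw [div_mul_cancel₀]; exact ne_of_gt hb
    have h2 : M ((a/b) * b) ≤ (a/b) * M b :=
      M_scale hM (le_of_lt (div_pos h0 hb)) (le_of_lt (by rwa [div_lt_one hb])) hb.le
    have h3 : (a/b) * M b < M b := by
      have := hnd b hb
      have hd : a/b < 1 := by rwa [div_lt_one hb]
      nlinarith
    linarith

lemma M_lt_imp (hM : IsOrliczFunction M) {a b : ℝ}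
    (hb : 0 ≤ b) (h : M a < M b) (ha : 0 ≤ a) : a < b := by
  by_contra hc
  push_neg at hc
  exact absurd (M_mono hM hb hc) (not_le.2 h)

lemma M_small (hM : IsOrliczFunction M) {ε : ℝ} (hε : 0 < ε) :
    ∃ z > (0:ℝ), M z ≤ ε := by
  have hcont : ContinuousWithinAt M (Set.Ici 0) 0 :=
    hM.continuousOn 0 (Set.mem_Ici.2 le_rfl)
  have h0 : Tendsto M (𝓝[>] (0:ℝ)) (𝓝 0) := by
    have h1 : Tendsto M (𝓝[Set.Ici 0] (0:ℝ)) (𝓝 (M 0)) := hcont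
    rw [hM.map_zero] at h1
    exact h1.mono_left (nhdsWithin_mono 0 Set.Ioi_subset_Ici_self)
  have hev : ∀ᶠ t in 𝓝[>] (0:ℝ), M t < ε := by
    have := h0.eventually (eventually_lt_nhds hε)
    simpa using this
  obtain ⟨t, ht, htp⟩ := (hev.and self_mem_nhdsWithin).exists
  exact ⟨t, htp, ht.le⟩

lemma delta2_extract (hnd : ∀ t > (0:ℝ), 0 < M t) (hΔ : Delta2Zero M) :
    ∃ c T₀ : ℝ, 0 < c ∧ c ≤ 1 ∧ 0 < T₀ ∧
      ∀ t : ℝ, 0 < t → 2 * t ≤ T₀ → c * M (2 * t) ≤ M t := by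
  unfold Delta2Zero at hΔ
  set S := {a : ℝ | ∀ᶠ t in 𝓝[>] (0:ℝ), a ≤ M t / M (2 * t)} with hS
  rw [liminf_eq] at hΔ
  have hSne : S.Nonempty := by
    by_contra h
    rw [Set.not_nonempty_iff_eq_empty] at h
    rw [← hS, h, Real.sSup_empty] at hΔ
    exact lt_irrefl _ hΔ
  have hSbdd : BddAbove S := by
    by_contra h
    rw [← hS, Real.sSup_of_not_bddAbove h] at hΔ
    exact lt_irrefl _ hΔ
  obtain ⟨a, haS, ha⟩ := exists_lt_of_lt_csSup hSne (by linarith : sSup S / 2 < sSup S)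
  have hapos : 0 < a := lt_of_le_of_lt (by linarith) ha
  have hmem : {t : ℝ | a ≤ M t / M (2*t)} ∈ 𝓝[>] (0:ℝ) := haS
  rw [mem_nhdsGT_iff_exists_Ioo_subset] at hmem
  obtain ⟨u, hu, hsub⟩ := hmem
  have hu0 : (0:ℝ) < u := hu
  refine ⟨min a 1, u, lt_min hapos one_pos, min_le_right _ _, hu0, ?_⟩
  intro t ht ht2
  have htu : t ∈ Set.Ioo (0:ℝ) u := ⟨ht, by linarith⟩
  have hrat : a ≤ M t / M (2*t) := hsub htu
  have hM2t : 0 < M (2*t) := hnd _ (by linarith)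
  have h2 : a * M (2*t) ≤ M t := by
    rw [← le_div_iff₀ hM2t]
    exact hrat
  calc min a 1 * M (2*t) ≤ a * M (2*t) := by
        apply mul_le_mul_of_nonneg_right (min_le_left _ _) hM2t.le
  _ ≤ M t := h2

lemma M_chain {c T₀ : ℝ} (hc : 0 < c)
    (hd : ∀ t : ℝ, 0 < t → 2 * t ≤ T₀ → c * M (2 * t) ≤ M t) :
    ∀ (J : ℕ) (t : ℝ), 0 < t → 2 ^ J * t ≤ T₀ → c ^ J * M (2 ^ J * t) ≤ M t := by
  intro J
  induction J with
  | zero => intro t ht h; simp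
  | succ J ih =>
    intro t ht h
    have h2 : (2:ℝ) ^ (J+1) * t = 2 * (2 ^ J * t) := by ring
    have hpt : 0 < (2:ℝ) ^ J * t := by positivity
    have h1 : c * M (2 * (2 ^ J * t)) ≤ M (2 ^ J * t) := hd _ hpt (by rw [← h2]; exact h)
    have h3 : 2 ^ J * t ≤ T₀ := by nlinarith [hpt]
    have h4 := ih t ht h3
    calc c ^ (J+1) * M (2 ^ (J+1) * t) = c ^ J * (c * M (2 * (2 ^ J * t))) := by
          rw [h2]; ring
    _ ≤ c ^ J * M (2 ^ J * t) := by
          apply mul_le_mul_of_nonneg_left h1 (by positivity)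
    _ ≤ M t := h4

end AuxOrlicz

section AuxSigma

variable {M : ℝ → ℝ}

lemma sigma_mono_pt (hmono : ∀ {a b : ℝ}, 0 ≤ a → a ≤ b → M a ≤ M b) {x y : ℕ → ℝ}
    (h : ∀ n, |x n| ≤ |y n|) : sigmaM M x ≤ sigmaM M y := by
  apply Summable.tsum_le_tsum _ ENNReal.summable ENNReal.summable
  intro n
  exact ENNReal.ofReal_le_ofReal (hmono (abs_nonneg _) (h n))

lemma sigma_scale (hscale : ∀ {θ t : ℝ}, 0 ≤ θ → θ ≤ 1 → 0 ≤ t → M (θ * t) ≤ θ * M t)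
    {θ : ℝ} (hθ : 0 ≤ θ) (hθ1 : θ ≤ 1) (x : ℕ → ℝ) :
    sigmaM M (fun n => θ * x n) ≤ ENNReal.ofReal θ * sigmaM M x := by
  unfold sigmaM
  rw [← ENNReal.tsum_mul_left]
  apply Summable.tsum_le_tsum _ ENNReal.summable ENNReal.summable
  intro n
  calc ENNReal.ofReal (M |θ * x n|) ≤ ENNReal.ofReal (θ * M |x n|) := by
        apply ENNReal.ofReal_le_ofReal
        rw [abs_mul, abs_of_nonneg hθ]
        exact hscale hθ hθ1 (abs_nonneg _)
  _ = ENNReal.ofReal θ * ENNReal.ofReal (M |x n|) := by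
        rw [ENNReal.ofReal_mul hθ]

lemma sigma_decomp (x : ℕ → ℝ) (n : ℕ) :
    sigmaM M x = ENNReal.ofReal (M |x n|) +
      ∑' i, (if i = n then 0 else ENNReal.ofReal (M |x i|)) := by
  rw [sigmaM, ENNReal.tsum_eq_add_tsum_ite n]
  congr 1
  apply tsum_congr
  intro i
  by_cases h : i = n <;> simp [h]

lemma sigma_div_mono (hmono : ∀ {a b : ℝ}, 0 ≤ a → a ≤ b → M a ≤ M b)
    {ρ ρ' : ℝ} (hρ : 0 < ρ) (hρρ' : ρ ≤ ρ') (x : ℕ → ℝ) :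
    sigmaM M (fun n => x n / ρ') ≤ sigmaM M (fun n => x n / ρ) := by
  apply sigma_mono_pt hmono
  intro n
  rw [abs_div, abs_div]
  rw [abs_of_pos hρ, abs_of_pos (lt_of_lt_of_le hρ hρρ')]
  exact div_le_div_of_nonneg_left (abs_nonneg _) hρ hρρ'

lemma sigma_single (hM0 : M 0 = 0) (n : ℕ) (t : ℝ) :
    sigmaM M (fun i => if i = n then t else 0) = ENNReal.ofReal (M |t|) := by
  unfold sigmaM
  have h : ∀ i : ℕ, ENNReal.ofReal (M |if i = n then t else 0|)
      = (if i = n then ENNReal.ofReal (M |t|) else 0) := by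
    intro i
    by_cases h : i = n <;> simp [h, hM0]
  rw [tsum_congr h, tsum_ite_eq]

lemma luxNorm_le {ρ : ℝ} (hρ : 0 < ρ) (x : ℕ → ℝ)
    (h : sigmaM M (fun n => x n / ρ) ≤ 1) : luxNorm M x ≤ ρ := by
  have hbdd : BddBelow {ρ : ℝ | 0 < ρ ∧ sigmaM M (fun n => x n / ρ) ≤ 1} := by
    refine ⟨0, ?_⟩
    rintro y ⟨hy, -⟩
    exact hy.le
  exact csInf_le hbdd ⟨hρ, h⟩

lemma luxNorm_nonneg (x : ℕ → ℝ) : 0 ≤ luxNorm M x := by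
  apply Real.sInf_nonneg
  rintro y ⟨hy, -⟩
  exact hy.le

lemma lux_set_nonempty (hscale : ∀ {θ t : ℝ}, 0 ≤ θ → θ ≤ 1 → 0 ≤ t → M (θ * t) ≤ θ * M t)
    {x : ℕ → ℝ} (hx : MemLM M x) :
    ∃ ρ : ℝ, 0 < ρ ∧ sigmaM M (fun n => x n / ρ) ≤ 1 := by
  obtain ⟨-, ρ₀, hρ₀, hfin⟩ := hx
  set a := sigmaM M (fun n => x n / ρ₀) with ha
  set lam : ℝ := max 1 a.toReal with hlam
  have hlam1 : (1:ℝ) ≤ lam := le_max_left _ _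
  have hlampos : (0:ℝ) < lam := by linarith
  refine ⟨lam * ρ₀, by positivity, ?_⟩
  have hptw : ∀ n, x n / (lam * ρ₀) = (1/lam) * (x n / ρ₀) := by
    intro n; field_simp
  have h1 : sigmaM M (fun n => x n / (lam * ρ₀)) ≤ ENNReal.ofReal (1/lam) * a := by
    calc sigmaM M (fun n => x n / (lam * ρ₀))
        = sigmaM M (fun n => (1/lam) * (x n / ρ₀)) := by
          congr 1; funext n; exact hptw n
    _ ≤ ENNReal.ofReal (1/lam) * a :=
        sigma_scale hscale (by positivity) (by
          rw [div_le_one hlampos]; exact hlam1) _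
  have h2 : ENNReal.ofReal (1/lam) * a ≤ 1 := by
    have haa : a = ENNReal.ofReal a.toReal := by
      rw [ENNReal.ofReal_toReal hfin]
    rw [haa]
    rw [← ENNReal.ofReal_mul (by positivity)]
    apply ENNReal.ofReal_le_one.2
    rw [one_div, inv_mul_le_iff₀ hlampos, mul_one]
    exact le_max_right _ _
  exact h1.trans h2

lemma sigma_le_one_of_lux_lt (hmono : ∀ {a b : ℝ}, 0 ≤ a → a ≤ b → M a ≤ M b)
    (hscale : ∀ {θ t : ℝ}, 0 ≤ θ → θ ≤ 1 → 0 ≤ t → M (θ * t) ≤ θ * M t) {x : ℕ → ℝ}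
    (hx : MemLM M x) {ρ' : ℝ}
    (h : luxNorm M x < ρ') : sigmaM M (fun n => x n / ρ') ≤ 1 := by
  obtain ⟨ρ, hρ, hσ⟩ := lux_set_nonempty hscale hx
  have hne : {ρ : ℝ | 0 < ρ ∧ sigmaM M (fun n => x n / ρ) ≤ 1}.Nonempty := ⟨ρ, hρ, hσ⟩
  obtain ⟨ρ₁, ⟨hρ₁, hσ₁⟩, hρ₁'⟩ := exists_lt_of_csInf_lt hne h
  calc sigmaM M (fun n => x n / ρ') ≤ sigmaM M (fun n => x n / ρ₁) :=
        sigma_div_mono hmono hρ₁ hρ₁'.le x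
  _ ≤ 1 := hσ₁

lemma memLM_tendsto {x : ℕ → ℝ} (hM : IsOrliczFunction M)
    (hpos : ∀ t > (0:ℝ), 0 < M t) (hx : MemLM M x) :
    ∀ ε > (0:ℝ), ∃ N, ∀ n ≥ N, |x n| ≤ ε := by
  obtain ⟨-, ρ₀, hρ₀, hfin⟩ := hx
  intro ε hε
  have hterm : Tendsto (fun n => ENNReal.ofReal (M |x n / ρ₀|)) atTop (𝓝 0) :=
    ENNReal.tendsto_atTop_zero_of_tsum_ne_top hfin
  have hMε : 0 < M (ε / ρ₀) := hpos _ (by positivity)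
  have hev : ∀ᶠ n in atTop, ENNReal.ofReal (M |x n / ρ₀|) < ENNReal.ofReal (M (ε/ρ₀)) := by
    apply hterm.eventually_lt_const
    simp [hMε]
  obtain ⟨N, hN⟩ := hev.exists_forall_of_atTop
  refine ⟨N, fun n hn => ?_⟩
  have h1 := hN n hn
  rw [ENNReal.ofReal_lt_ofReal_iff hMε] at h1
  have h2 : |x n / ρ₀| < ε / ρ₀ := M_lt_imp hM (by positivity) h1 (abs_nonneg _)
  rw [abs_div, abs_of_pos hρ₀] at h2
  calc |x n| = |x n| / ρ₀ * ρ₀ := by field_simp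
  _ ≤ ε / ρ₀ * ρ₀ := by apply mul_le_mul_of_nonneg_right h2.le hρ₀.le
  _ = ε := by field_simp

lemma memLM_add (hmono : ∀ {a b : ℝ}, 0 ≤ a → a ≤ b → M a ≤ M b)
    (hnn : ∀ t : ℝ, 0 ≤ t → 0 ≤ M t)
    {x y : ℕ → ℝ} (hx : MemLM M x) (hy : MemLM M y) : MemLM M (x + y) := by
  obtain ⟨⟨Ax, hAx⟩, ρx, hρx, hfx⟩ := hx
  obtain ⟨⟨Ay, hAy⟩, ρy, hρy, hfy⟩ := hy
  constructor
  · exact ⟨Ax + Ay, fun n => (abs_add_le _ _).trans (add_le_add (hAx n) (hAy n))⟩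
  · set ρ := max ρx ρy with hρdef
    have hρ : 0 < ρ := lt_max_of_lt_left hρx
    refine ⟨2 * ρ, by positivity, ?_⟩
    have hpt : ∀ n, ENNReal.ofReal (M |(x + y) n / (2*ρ)|) ≤
        ENNReal.ofReal (M |x n / ρx|) + ENNReal.ofReal (M |y n / ρy|) := by
      intro n
      have hMb : M (|(x + y) n| / (2*ρ)) ≤ M (|x n| / ρx) + M (|y n| / ρy) := by
        rcases le_total |x n| |y n| with h | h
        · have h1 : |(x + y) n| / (2*ρ) ≤ |y n| / ρy := by
            rw [div_le_div_iff₀ (by positivity) hρy]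
            have h3 : |(x+y) n| ≤ 2 * |y n| := by
              calc |(x+y) n| ≤ |x n| + |y n| := abs_add_le _ _
              _ ≤ 2 * |y n| := by linarith
            have hρ2 : ρy ≤ ρ := le_max_right _ _
            nlinarith [abs_nonneg ((x+y) n), abs_nonneg (y n)]
          calc M (|(x + y) n| / (2*ρ)) ≤ M (|y n| / ρy) := hmono (by positivity) h1
          _ ≤ M (|x n| / ρx) + M (|y n| / ρy) := by
              have := hnn (|x n| / ρx) (by positivity); linarith
        · have h1 : |(x + y) n| / (2*ρ) ≤ |x n| / ρx := by
            rw [div_le_div_iff₀ (by positivity) hρx]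
            have h3 : |(x+y) n| ≤ 2 * |x n| := by
              calc |(x+y) n| ≤ |x n| + |y n| := abs_add_le _ _
              _ ≤ 2 * |x n| := by linarith
            have hρ2 : ρx ≤ ρ := le_max_left _ _
            nlinarith [abs_nonneg ((x+y) n), abs_nonneg (x n)]
          calc M (|(x + y) n| / (2*ρ)) ≤ M (|x n| / ρx) := hmono (by positivity) h1
          _ ≤ M (|x n| / ρx) + M (|y n| / ρy) := by
              have := hnn (|y n| / ρy) (by positivity); linarith
      calc ENNReal.ofReal (M |(x + y) n / (2*ρ)|)
          = ENNReal.ofReal (M (|(x + y) n| / (2*ρ))) := by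
            rw [abs_div, abs_of_pos (by positivity : (0:ℝ) < 2*ρ)]
      _ ≤ ENNReal.ofReal (M (|x n| / ρx) + M (|y n| / ρy)) :=
            ENNReal.ofReal_le_ofReal hMb
      _ ≤ ENNReal.ofReal (M (|x n| / ρx)) + ENNReal.ofReal (M (|y n| / ρy)) :=
            ENNReal.ofReal_add_le
      _ = ENNReal.ofReal (M |x n / ρx|) + ENNReal.ofReal (M |y n / ρy|) := by
            rw [abs_div, abs_of_pos hρx, abs_div, abs_of_pos hρy]
    have hsum : sigmaM M (fun n => (x + y) n / (2*ρ)) ≤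
        sigmaM M (fun n => x n / ρx) + sigmaM M (fun n => y n / ρy) := by
      unfold sigmaM
      rw [← ENNReal.tsum_add]
      exact Summable.tsum_le_tsum hpt ENNReal.summable ENNReal.summable
    intro htop
    rw [htop] at hsum
    exact absurd (hsum.trans_lt (lt_top_iff_ne_top.2 (ENNReal.add_ne_top.2 ⟨hfx, hfy⟩)))
      (lt_irrefl _)

lemma memLM_single (hM0 : M 0 = 0) (n : ℕ) (t : ℝ) :
    MemLM M (fun i => if i = n then t else 0) := by
  constructor
  · refine ⟨|t|, fun i => ?_⟩
    by_cases h : i = n <;> simp [h]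
  · refine ⟨1, one_pos, ?_⟩
    have : (fun i => (if i = n then t else 0) / 1) = (fun i => if i = n then t else 0) := by
      funext i; simp
    rw [this, sigma_single hM0]
    exact ENNReal.ofReal_ne_top

end AuxSigma

lemma exists_seq_rel {α : Type*} (P : α → Prop) (R : α → α → Prop) (a₀ : α) (h₀ : P a₀)
    (h : ∀ a, P a → ∃ b, P b ∧ R a b) :
    ∃ f : ℕ → α, f 0 = a₀ ∧ (∀ n, P (f n)) ∧ ∀ n, R (f n) (f (n + 1)) := by
  choose g hg1 hg2 using h
  let F : ℕ → {a : α // P a} := fun n => Nat.rec ⟨a₀, h₀⟩ (fun _ p => ⟨g p.1 p.2, hg1 p.1 p.2⟩) n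
  refine ⟨fun n => (F n).1, rfl, fun n => (F n).2, fun n => ?_⟩
  exact hg2 (F n).1 (F n).2

/-- A valid single-coordinate step of the construction. -/
def StepOK (M : ℝ → ℝ) (b : (ℕ → ℝ) → ℝ) (sg β₀ K₂ vmax : ℝ)
    (x : ℕ → ℝ) (m n : ℕ) (v s : ℝ) : Prop :=
  m + 1 ≤ n ∧ 0 < v ∧ v ≤ vmax ∧ (s = 1 ∨ s = -1) ∧ |x n| ≤ v / 4 ∧
  -(β₀ * M (v / (4 * K₂))) ≤ sg * (b (x + fun i => if i = n then s * v else 0) - b x)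

/-- The set of achievable gains from a state. -/
def StepSet (M : ℝ → ℝ) (b : (ℕ → ℝ) → ℝ) (sg β₀ K₂ vmax : ℝ)
    (x : ℕ → ℝ) (m : ℕ) : Set ℝ :=
  {d | ∃ n v s, StepOK M b sg β₀ K₂ vmax x m n v s ∧ d = M (v / (4 * K₂))}

set_option maxHeartbeats 4000000 in
/-- Let `M` be a non-degenerate Orlicz function with `Δ₂` at zero such that
`limsup_{t↓0} M(t)/t^p = ∞` for some `p ∈ (1,2]`. Then there is no non-trivial Fréchet
differentiable bump `b` on `ℓ_M` with, at every point `x`, the estimate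
`b(x+h) = b(x) + ⟨b'(x),h⟩ + O(‖h‖^p)`; here `b'(x)` is a continuous linear functional. -/
theorem stmt16 (M : ℝ → ℝ) (hM : IsOrliczFunction M) (hnd : ∀ t > (0 : ℝ), 0 < M t)
    (hΔ : Delta2Zero M) (p : ℝ) (hp1 : 1 < p) (hp2 : p ≤ 2)
    (hlim : ∀ C : ℝ, ∃ᶠ t in 𝓝[>] (0 : ℝ), C < M t / t ^ p) :
    ¬ ∃ (b : (ℕ → ℝ) → ℝ) (b' : (ℕ → ℝ) → (ℕ → ℝ) → ℝ),
      -- `b` is a non-trivial bump on `ℓ_M`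
      (∃ x, MemLM M x ∧ b x ≠ 0) ∧
      (∃ K : ℝ, ∀ x, MemLM M x → b x ≠ 0 → luxNorm M x ≤ K) ∧
      -- at every `x ∈ ℓ_M`, `b'(x)` is a continuous linear functional and the estimate
      -- `|b(x+h) − b(x) − ⟨b'(x),h⟩| ≤ C‖h‖^p` holds for `‖h‖ ≤ r`
      (∀ x, MemLM M x →
        (∀ h k, MemLM M h → MemLM M k → b' x (h + k) = b' x h + b' x k) ∧
        (∀ (c : ℝ) (h), MemLM M h → b' x (c • h) = c * b' x h) ∧
        (∃ L : ℝ, ∀ h, MemLM M h → |b' x h| ≤ L * luxNorm M h) ∧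
        (∃ C > (0 : ℝ), ∃ r > (0 : ℝ), ∀ h, MemLM M h → luxNorm M h ≤ r →
          |b (x + h) - b x - b' x h| ≤ C * luxNorm M h ^ p)) := by
  rintro ⟨b, b', ⟨x₀, hx₀M, hbx₀⟩, ⟨K, hK⟩, hpack⟩
  -- basic facts about M
  have hmono : ∀ {a b : ℝ}, 0 ≤ a → a ≤ b → M a ≤ M b := fun ha hab => M_mono hM ha hab
  have hnn : ∀ t : ℝ, 0 ≤ t → 0 ≤ M t := fun t ht => M_nonneg hM ht
  have hscale : ∀ {θ t : ℝ}, 0 ≤ θ → θ ≤ 1 → 0 ≤ t → M (θ * t) ≤ θ * M t :=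
    fun hθ hθ1 ht => M_scale hM hθ hθ1 ht
  have hp0 : (0:ℝ) < p := by linarith
  obtain ⟨c, T₀, hc, hc1, hT₀, hΔ₂⟩ := delta2_extract hnd hΔ
  have hchain := M_chain (M := M) hc hΔ₂
  -- sign and height of the bump at x₀
  set sg : ℝ := if 0 < b x₀ then 1 else -1 with hsgdef
  have hsg : sg = 1 ∨ sg = -1 := by
    by_cases h : 0 < b x₀ <;> simp [hsgdef, h]
  set β₀ : ℝ := sg * b x₀ with hβ₀def
  have hβ₀ : 0 < β₀ := by
    rcases lt_trichotomy (b x₀) 0 with h | h | h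
    · have : sg = -1 := by simp [hsgdef, not_lt.2 h.le, h.not_gt]
      rw [hβ₀def, this]; nlinarith
    · exact absurd h hbx₀
    · have : sg = 1 := by simp [hsgdef, h]
      rw [hβ₀def, this]; linarith
  -- constants
  set K₁ : ℝ := max K 1 with hK₁def
  have hK₁1 : 1 ≤ K₁ := le_max_right _ _
  have hKK₁ : K ≤ K₁ := le_max_left _ _
  set K₂ : ℝ := 8 * K₁ with hK₂def
  have hK₂8 : 8 ≤ K₂ := by nlinarith
  have hK₂ : 0 < K₂ := by linarith
  have h4K₂ : 1 ≤ 4 * K₂ := by linarith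
  obtain ⟨s₀, hs₀, hs₀M⟩ := M_small hM (by norm_num : (0:ℝ) < 1/2)
  obtain ⟨vm, hvm, hvmM⟩ := M_small hM (by norm_num : (0:ℝ) < 1/4)
  set vmax : ℝ := min vm T₀ with hvmaxdef
  have hvmax : 0 < vmax := lt_min hvm hT₀
  have hvmaxM : M vmax ≤ 1/4 := le_trans (hmono hvmax.le (min_le_left _ _)) hvmM
  -- good scales
  have hgood : ∀ G Bnd : ℝ, 0 < Bnd → ∃ w, 0 < w ∧ w < Bnd ∧ G * w ^ p ≤ M w := by
    intro G Bnd hBnd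
    have hfreq := (hlim (max G 0)).and_eventually
      (Ioo_mem_nhdsGT_of_mem (Set.mem_Ico.2 ⟨le_refl 0, hBnd⟩))
    obtain ⟨w, hw1, hw2⟩ := hfreq.exists
    refine ⟨w, hw2.1, hw2.2, ?_⟩
    have hwp : (0:ℝ) < w ^ p := Real.rpow_pos_of_pos hw2.1 p
    have : max G 0 * w ^ p ≤ M w := by
      rw [← le_div_iff₀ hwp]
      exact hw1.le
    calc G * w ^ p ≤ max G 0 * w ^ p :=
          mul_le_mul_of_nonneg_right (le_max_left _ _) hwp.le
    _ ≤ M w := this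
  -- the σ-form of the support bound
  have hsupp : ∀ x, MemLM M x → b x ≠ 0 →
      sigmaM M (fun n => x n / K₂) ≤ ENNReal.ofReal (1/4) := by
    intro x hx hbx
    have hlux : luxNorm M x ≤ K := hK x hx hbx
    have hlt : luxNorm M x < 2 * K₁ := by
      calc luxNorm M x ≤ K := hlux
      _ ≤ K₁ := hKK₁
      _ < 2 * K₁ := by linarith
    obtain ⟨ρ', hρ', hσ'⟩ := lux_set_nonempty hscale hx
    have hne : {ρ : ℝ | 0 < ρ ∧ sigmaM M (fun n => x n / ρ) ≤ 1}.Nonempty := ⟨ρ', hρ', hσ'⟩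
    obtain ⟨ρ, ⟨hρ, hσ⟩, hρlt⟩ := exists_lt_of_csInf_lt hne hlt
    have hθ1 : ρ / K₂ ≤ 1/4 := by
      rw [div_le_iff₀ hK₂]
      calc ρ ≤ 2 * K₁ := hρlt.le
      _ = 1/4 * (8 * K₁) := by ring
      _ = 1/4 * K₂ := by rw [hK₂def]
    have heq : (fun n => x n / K₂) = (fun n => (ρ / K₂) * (x n / ρ)) := by
      funext n
      field_simp
    rw [heq]
    calc sigmaM M (fun n => (ρ / K₂) * (x n / ρ))
        ≤ ENNReal.ofReal (ρ / K₂) * sigmaM M (fun n => x n / ρ) :=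
          sigma_scale hscale (by positivity) (by linarith) _
    _ ≤ ENNReal.ofReal (ρ / K₂) * 1 := mul_le_mul_right hσ _
    _ = ENNReal.ofReal (ρ / K₂) := mul_one _
    _ ≤ ENNReal.ofReal (1/4) := ENNReal.ofReal_le_ofReal hθ1
  -- Step existence at every point (using that point's own Taylor data)
  have hL1 : ∀ (x : ℕ → ℝ) (m : ℕ), MemLM M x →
      ∃ n v s, StepOK M b sg β₀ K₂ vmax x m n v s := by
    intro x m hx
    obtain ⟨-, hhom, -, C, hC, r, hr, htay⟩ := hpack x hx
    have hGB : (0:ℝ) < min vmax (s₀ * r) / (4 * K₂) := by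
      have : (0:ℝ) < min vmax (s₀ * r) := lt_min hvmax (by positivity)
      positivity
    obtain ⟨w, hw0, hwB, hwG⟩ := hgood ((C+1) * ((4*K₂/s₀) ^ p) / β₀) _ hGB
    set v : ℝ := 4 * K₂ * w with hvdef
    have hv0 : 0 < v := by positivity
    have hvmin : v ≤ min vmax (s₀ * r) := by
      rw [hvdef]
      have h1 : w ≤ min vmax (s₀ * r) / (4 * K₂) := hwB.le
      rw [le_div_iff₀ (by positivity : (0:ℝ) < 4*K₂)] at h1
      linarith [h1]
    have hvvmax : v ≤ vmax := hvmin.trans (min_le_left _ _)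
    have hvr : v ≤ s₀ * r := hvmin.trans (min_le_right _ _)
    set η : ℝ := v / s₀ with hηdef
    have hη0 : 0 < η := by positivity
    have hηr : η ≤ r := by
      rw [hηdef, div_le_iff₀ hs₀]
      linarith [hvr]
    obtain ⟨N, hN⟩ := memLM_tendsto hM hnd hx (v/4) (by positivity)
    set n : ℕ := max N (m+1) with hndef
    have hnm : m + 1 ≤ n := le_max_right _ _
    have hxn : |x n| ≤ v/4 := hN n (le_max_left _ _)
    set e : ℝ := b' x (fun i => if i = n then 1 else 0) with hedef
    set s : ℝ := if 0 ≤ sg * e then 1 else -1 with hsdef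
    have hs1 : s = 1 ∨ s = -1 := by
      by_cases h0 : 0 ≤ sg * e <;> simp [hsdef, h0]
    set h : ℕ → ℝ := fun i => if i = n then s * v else 0 with hhdef
    have hMemh : MemLM M h := memLM_single hM.map_zero n (s*v)
    have hsv : |s * v| = v := by
      rcases hs1 with h1 | h1 <;> rw [h1] <;> simp [abs_of_pos hv0]
    have hluxh : luxNorm M h ≤ η := by
      apply luxNorm_le hη0
      have heq2 : (fun i => h i / η) = (fun i => if i = n then (s*v)/η else 0) := by
        funext i
        by_cases h0 : i = n <;> simp [hhdef, h0]
      rw [heq2, sigma_single hM.map_zero]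
      have heq3 : |s*v/η| = s₀ := by
        rw [abs_div, hsv, abs_of_pos hη0, hηdef, div_div_eq_mul_div,
          mul_div_cancel_left₀ s₀ hv0.ne']
      rw [heq3]
      exact ENNReal.ofReal_le_one.2 (by linarith [hs₀M])
    have htayh := htay h hMemh (hluxh.trans hηr)
    have hhsmul : h = (s*v) • (fun i => if i = n then (1:ℝ) else 0) := by
      funext i
      by_cases h0 : i = n <;> simp [hhdef, h0]
    have hbh : b' x h = (s*v) * e := by
      rw [hhsmul, hedef]
      exact hhom (s*v) _ (memLM_single hM.map_zero n 1)
    have hsgn : 0 ≤ sg * b' x h := by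
      rw [hbh]
      have hre : sg * ((s*v) * e) = s * (v * (sg * e)) := by ring
      rw [hre]
      by_cases h0 : 0 ≤ sg * e
      · have hs' : s = 1 := by simp [hsdef, h0]
        rw [hs', one_mul]
        exact mul_nonneg hv0.le h0
      · have hs' : s = -1 := by simp [hsdef, h0]
        rw [hs']
        push_neg at h0
        nlinarith
    have hηp : η ^ p = (4*K₂/s₀)^p * w^p := by
      have heq4 : η = (4*K₂/s₀) * w := by
        rw [hηdef, hvdef, div_mul_eq_mul_div]
      rw [heq4, Real.mul_rpow (by positivity) hw0.le]
    have hspend : C * luxNorm M h ^ p ≤ β₀ * M w := by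
      have h1 : luxNorm M h ^ p ≤ η ^ p :=
        Real.rpow_le_rpow (luxNorm_nonneg _) hluxh hp0.le
      have h5 : (0:ℝ) < (4*K₂/s₀)^p := Real.rpow_pos_of_pos (by positivity) p
      have h6 : (0:ℝ) < w^p := Real.rpow_pos_of_pos hw0 p
      have h2 : C * η^p ≤ β₀ * M w := by
        rw [hηp]
        have h3 : β₀ * ((C+1) * ((4*K₂/s₀)^p) / β₀ * w^p) ≤ β₀ * M w :=
          mul_le_mul_of_nonneg_left hwG hβ₀.le
        have h4 : β₀ * ((C+1) * ((4*K₂/s₀)^p) / β₀ * w^p)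
            = (C+1) * ((4*K₂/s₀)^p) * w^p := by
          rw [div_mul_eq_mul_div, mul_div_assoc', mul_div_cancel_left₀ _ hβ₀.ne']
        rw [h4] at h3
        nlinarith
      calc C * luxNorm M h ^ p ≤ C * η^p := mul_le_mul_of_nonneg_left h1 hC.le
      _ ≤ β₀ * M w := h2
    refine ⟨n, v, s, hnm, hv0, hvvmax, hs1, hxn, ?_⟩
    have hw4 : v / (4*K₂) = w := by
      rw [hvdef, mul_div_cancel_left₀ w (by positivity : (4:ℝ)*K₂ ≠ 0)]
    rw [hw4]
    show -(β₀ * M w) ≤ sg * (b (x + h) - b x)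
    have habs : |sg| = 1 := by rcases hsg with h1 | h1 <;> rw [h1] <;> norm_num
    have h7 : -(C * luxNorm M h ^ p) ≤ sg * (b (x+h) - b x - b' x h) := by
      have h8 : |sg * (b (x+h) - b x - b' x h)| = |b (x+h) - b x - b' x h| := by
        rw [abs_mul, habs, one_mul]
      have h9 := neg_abs_le (sg * (b (x+h) - b x - b' x h))
      rw [h8] at h9
      linarith [htayh]
    have h10 : sg * (b (x+h) - b x) = sg * (b (x+h) - b x - b' x h) + sg * b' x h := by
      ring
    rw [h10]
    linarith [hspend, hsgn, h7]
  -- upper bound on the achievable set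
  have hub : ∀ (x : ℕ → ℝ) (m : ℕ) (d : ℝ),
      d ∈ StepSet M b sg β₀ K₂ vmax x m → d ≤ 1/4 := by
    rintro x m d ⟨n, v, s, hOK, rfl⟩
    have hv := hOK.2.1
    calc M (v / (4*K₂)) ≤ M vmax := by
          apply hmono (by positivity)
          calc v / (4*K₂) ≤ v / 1 := by
                apply div_le_div_of_nonneg_left hOK.2.1.le one_pos h4K₂
          _ = v := div_one v
          _ ≤ vmax := hOK.2.2.1
    _ ≤ 1/4 := hvmaxM
  -- one recursion step, choosing a near-maximal gain
  have hstep : ∀ st : (ℕ → ℝ) × ℕ, MemLM M st.1 → ∃ st' : (ℕ → ℝ) × ℕ, MemLM M st'.1 ∧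
      (∃ n v s, StepOK M b sg β₀ K₂ vmax st.1 st.2 n v s ∧
        st'.1 = st.1 + (fun i => if i = n then s * v else 0) ∧ st'.2 = n + 1 ∧
        (∀ d ∈ StepSet M b sg β₀ K₂ vmax st.1 st.2, d < 2 * M (v / (4 * K₂)))) := by
    rintro ⟨x, m⟩ hx
    have hA : (StepSet M b sg β₀ K₂ vmax x m).Nonempty := by
      obtain ⟨n, v, s, hOK⟩ := hL1 x m hx
      exact ⟨M (v / (4*K₂)), n, v, s, hOK, rfl⟩
    have hAbdd : BddAbove (StepSet M b sg β₀ K₂ vmax x m) := ⟨1/4, fun d hd => hub x m d hd⟩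
    have hSpos : 0 < sSup (StepSet M b sg β₀ K₂ vmax x m) := by
      obtain ⟨d, n, v, s, hOK, rfl⟩ := hA
      calc (0:ℝ) < M (v / (4*K₂)) := hnd _ (by have := hOK.2.1; positivity)
      _ ≤ sSup _ := le_csSup hAbdd ⟨n, v, s, hOK, rfl⟩
    obtain ⟨d, hdA, hdgt⟩ := exists_lt_of_lt_csSup hA
      (by linarith : sSup (StepSet M b sg β₀ K₂ vmax x m) / 2
        < sSup (StepSet M b sg β₀ K₂ vmax x m))
    obtain ⟨n, v, s, hOK, hdeq⟩ := hdA
    refine ⟨(x + fun i => if i = n then s * v else 0, n + 1), ?_, n, v, s, hOK, rfl, rfl, ?_⟩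
    · exact memLM_add hmono hnn hx (memLM_single hM.map_zero n (s*v))
    · intro d' hd'
      have h1 : d' ≤ sSup (StepSet M b sg β₀ K₂ vmax x m) := le_csSup hAbdd hd'
      rw [← hdeq]
      linarith
  obtain ⟨f, hf0, hfMem, hfRel⟩ := exists_seq_rel _ _ ((x₀, 0) : (ℕ → ℝ) × ℕ) hx₀M hstep
  choose nn vv ss hOK hxsucc hmsucc hhalf using hfRel
  have hvvpos : ∀ k, 0 < vv k := fun k => (hOK k).2.1
  have hδpos : ∀ k, 0 < M (vv k / (4*K₂)) := fun k => hnd _ (by have := hvvpos k; positivity)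
  have hδle : ∀ k, M (vv k / (4*K₂)) ≤ 1/4 :=
    fun k => hub _ _ _ ⟨nn k, vv k, ss k, hOK k, rfl⟩
  have hm0 : (f 0).2 = 0 := by rw [hf0]
  have hX0 : (f 0).1 = x₀ := by rw [hf0]
  have hnlb : ∀ k, (f k).2 + 1 ≤ nn k := fun k => (hOK k).1
  have hm2 : ∀ k, (f k).2 + 2 ≤ (f (k+1)).2 := by
    intro k
    rw [hmsucc k]
    have := hnlb k
    omega
  have hmmono : ∀ j k, j ≤ k → (f j).2 ≤ (f k).2 := by
    intro j k hjk
    induction hjk with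
    | refl => exact le_rfl
    | @step k' hk' ih =>
      have h2 := hm2 k'
      have h3 : (f (Nat.succ k')).2 = (f (k'+1)).2 := rfl
      omega
  have hmlb : ∀ k, 2*k ≤ (f k).2 := by
    intro k
    induction k with
    | zero => omega
    | succ k ih =>
      have := hm2 k
      omega
  have hnnmono : ∀ j k, j < k → nn j < nn k := by
    intro j k hjk
    have h1 : (f (j+1)).2 ≤ (f k).2 := hmmono _ _ hjk
    have h2 := hmsucc j
    have h3 := hnlb k
    omega
  have hnn_inj : ∀ j k, nn j = nn k → j = k := by
    intro j k h
    rcases lt_trichotomy j k with h1 | h1 | h1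
    · exact absurd h (hnnmono j k h1).ne
    · exact h1
    · exact absurd h.symm (hnnmono k j h1).ne
  have hfrozen : ∀ k i, i ≠ nn k → (f (k+1)).1 i = (f k).1 i := by
    intro k i hi
    rw [hxsucc k]
    simp [hi]
  have hXn : ∀ k, (f (k+1)).1 (nn k) = (f k).1 (nn k) + ss k * vv k := by
    intro k
    rw [hxsucc k]
    simp
  have hXeq : ∀ k i, (∀ j, j < k → i ≠ nn j) → (f k).1 i = x₀ i := by
    intro k
    induction k with
    | zero => intro i _; rw [hX0]
    | succ k ih =>
      intro i hi
      rw [hfrozen k i (hi k (Nat.lt_succ_self k))]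
      exact ih i (fun j hj => hi j (hj.trans (Nat.lt_succ_self k)))
  have hXfor : ∀ j k, j < k → (f k).1 (nn j) = x₀ (nn j) + ss j * vv j := by
    intro j k hjk
    induction k with
    | zero => omega
    | succ k ih =>
      rcases Nat.lt_succ_iff_lt_or_eq.mp hjk with h | h
      · rw [hfrozen k (nn j) (fun he => absurd (hnn_inj _ _ he) (Nat.ne_of_lt h))]
        exact ih h
      · subst h
        rw [hXn j, hXeq j (nn j) (fun i hi he => absurd (hnn_inj _ _ he.symm) (Nat.ne_of_lt hi))]
  have hmn_ne : ∀ k j, (f k).2 ≠ nn j := by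
    intro k j
    rcases le_or_gt k j with h | h
    · have h1 : (f k).2 ≤ (f j).2 := hmmono _ _ h
      have := hnlb j
      omega
    · have h1 : (f (j+1)).2 ≤ (f k).2 := hmmono _ _ h
      have h2 := hmsucc j
      omega
  have hssabs : ∀ k, |ss k * vv k| = vv k := by
    intro k
    rcases (hOK k).2.2.2.1 with h | h <;> rw [h] <;>
      simp [abs_of_pos (hvvpos k)]
  -- the σ-gain invariant, one step
  have hstep_sigma : ∀ k, sigmaM M (fun n => (f k).1 n / K₂) + ENNReal.ofReal (M (vv k/(4*K₂)))
      ≤ sigmaM M (fun n => (f (k+1)).1 n / K₂) := by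
    intro k
    have hd1 : sigmaM M (fun n => (f k).1 n / K₂) = ENNReal.ofReal (M |(f k).1 (nn k) / K₂|)
        + ∑' i, (if i = nn k then 0 else ENNReal.ofReal (M |(f k).1 i / K₂|)) :=
      sigma_decomp _ _
    have hd2 : sigmaM M (fun n => (f (k+1)).1 n / K₂)
        = ENNReal.ofReal (M |(f (k+1)).1 (nn k) / K₂|)
        + ∑' i, (if i = nn k then 0 else ENNReal.ofReal (M |(f (k+1)).1 i / K₂|)) :=
      sigma_decomp _ _
    have hR : (∑' i, (if i = nn k then 0 else ENNReal.ofReal (M |(f (k+1)).1 i / K₂|)))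
        = ∑' i, (if i = nn k then 0 else ENNReal.ofReal (M |(f k).1 i / K₂|)) := by
      apply tsum_congr
      intro i
      by_cases h : i = nn k
      · simp [h]
      · rw [if_neg h, if_neg h, hfrozen k i h]
    have habs_old : |(f k).1 (nn k)| ≤ vv k / 4 := (hOK k).2.2.2.2.1
    have habs_new : 3/4 * vv k ≤ |(f (k+1)).1 (nn k)| := by
      rw [hXn k]
      have h0 : ss k * vv k = ((f k).1 (nn k) + ss k * vv k) + (-((f k).1 (nn k))) := by ring
      have h1 := abs_add_le ((f k).1 (nn k) + ss k * vv k) (-((f k).1 (nn k)))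
      rw [← h0, hssabs k, abs_neg] at h1
      linarith
    have hva := (hvvpos k).le
    have hMnew : M (|(f k).1 (nn k)| / K₂) + M (vv k/(4*K₂))
        ≤ M (|(f (k+1)).1 (nn k)| / K₂) := by
      have h2w : M (2 * (vv k/(4*K₂))) ≤ M (|(f (k+1)).1 (nn k)| / K₂) := by
        apply hmono (by positivity)
        rw [(by ring : 2 * (vv k/(4*K₂)) = (vv k/2) / K₂)]
        gcongr
        linarith
      have hdbl : 2 * M (vv k/(4*K₂)) ≤ M (2 * (vv k/(4*K₂))) := M_double hM (by positivity)
      have hold : M (|(f k).1 (nn k)|/K₂) ≤ M (vv k/(4*K₂)) := by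
        apply hmono (by positivity)
        rw [(by ring : vv k/(4*K₂) = (vv k/4) / K₂)]
        gcongr
      linarith
    have habs1 : ENNReal.ofReal (M |(f k).1 (nn k) / K₂|)
        = ENNReal.ofReal (M (|(f k).1 (nn k)| / K₂)) := by
      rw [abs_div, abs_of_pos hK₂]
    have habs2 : ENNReal.ofReal (M |(f (k+1)).1 (nn k) / K₂|)
        = ENNReal.ofReal (M (|(f (k+1)).1 (nn k)| / K₂)) := by
      rw [abs_div, abs_of_pos hK₂]
    rw [hd1, hd2, hR, habs1, habs2]
    have hkey : ENNReal.ofReal (M (|(f k).1 (nn k)| / K₂)) + ENNReal.ofReal (M (vv k/(4*K₂)))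
        ≤ ENNReal.ofReal (M (|(f (k+1)).1 (nn k)| / K₂)) := by
      rw [← ENNReal.ofReal_add (hnn _ (by positivity)) (hnn _ (by positivity))]
      exact ENNReal.ofReal_le_ofReal hMnew
    calc ENNReal.ofReal (M (|(f k).1 (nn k)| / K₂))
          + (∑' i, (if i = nn k then 0 else ENNReal.ofReal (M |(f k).1 i / K₂|)))
          + ENNReal.ofReal (M (vv k/(4*K₂)))
        = (ENNReal.ofReal (M (|(f k).1 (nn k)| / K₂)) + ENNReal.ofReal (M (vv k/(4*K₂))))
          + ∑' i, (if i = nn k then 0 else ENNReal.ofReal (M |(f k).1 i / K₂|)) := by ring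
    _ ≤ ENNReal.ofReal (M (|(f (k+1)).1 (nn k)| / K₂))
          + ∑' i, (if i = nn k then 0 else ENNReal.ofReal (M |(f k).1 i / K₂|)) :=
        add_le_add_left hkey _
  -- cumulative invariants
  have hσinv : ∀ k, sigmaM M (fun n => x₀ n / K₂)
      + ENNReal.ofReal (∑ j ∈ Finset.range k, M (vv j/(4*K₂)))
      ≤ sigmaM M (fun n => (f k).1 n / K₂) := by
    intro k
    induction k with
    | zero => simp [hX0]
    | succ k ih =>
      have h1 := hstep_sigma k
      rw [Finset.sum_range_succ, ENNReal.ofReal_add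
        (Finset.sum_nonneg fun j _ => (hδpos j).le) (hδpos k).le, ← add_assoc]
      exact le_trans (add_le_add_left ih _) h1
  have hbinv : ∀ k, β₀ * (1 - (∑ j ∈ Finset.range k, M (vv j/(4*K₂)))) ≤ sg * b ((f k).1) := by
    intro k
    induction k with
    | zero =>
      rw [hX0]
      simp [hβ₀def]
    | succ k ih =>
      have hlast : -(β₀ * M (vv k / (4 * K₂))) ≤
          sg * (b ((f k).1 + fun i => if i = nn k then ss k * vv k else 0) - b (f k).1) :=
        (hOK k).2.2.2.2.2
      have hXs : (f (k+1)).1 = (f k).1 + fun i => if i = nn k then ss k * vv k else 0 :=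
        hxsucc k
      rw [hXs, Finset.sum_range_succ]
      have hexp : β₀ * (1 - ((∑ j ∈ Finset.range k, M (vv j/(4*K₂))) + M (vv k/(4*K₂))))
          = β₀ * (1 - ∑ j ∈ Finset.range k, M (vv j/(4*K₂))) - β₀ * M (vv k/(4*K₂)) := by
        ring
      have hexp2 : sg * b ((f k).1 + fun i => if i = nn k then ss k * vv k else 0)
          = sg * b (f k).1
            + sg * (b ((f k).1 + fun i => if i = nn k then ss k * vv k else 0) - b (f k).1) := by
        ring
      rw [hexp, hexp2]
      linarith
  -- case analysis on whether the cumulative gain ever crosses 1/2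
  by_cases hcross : ∃ k, 1/2 < ∑ j ∈ Finset.range k, M (vv j/(4*K₂))
  · -- gain crossed 1/2 : contradiction with the bounded support
    classical
    have hk₀ : 1/2 < ∑ j ∈ Finset.range (Nat.find hcross), M (vv j/(4*K₂)) :=
      Nat.find_spec hcross
    have hk₀pos : Nat.find hcross ≠ 0 := by
      intro h
      rw [h] at hk₀
      simp at hk₀
      linarith
    obtain ⟨k₁, hk₁⟩ := Nat.exists_eq_succ_of_ne_zero hk₀pos
    rw [hk₁] at hk₀
    have hprev : ¬ (1/2 < ∑ j ∈ Finset.range k₁, M (vv j/(4*K₂))) :=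
      Nat.find_min hcross (by omega)
    push_neg at hprev
    have hgk : ∑ j ∈ Finset.range (k₁+1), M (vv j/(4*K₂)) ≤ 3/4 := by
      rw [Finset.sum_range_succ]
      linarith [hδle k₁]
    have hb1 : β₀ * (1 - 3/4) ≤ sg * b ((f (k₁+1)).1) := by
      calc β₀ * (1 - 3/4) ≤ β₀ * (1 - ∑ j ∈ Finset.range (k₁+1), M (vv j/(4*K₂))) := by
            apply mul_le_mul_of_nonneg_left _ hβ₀.le
            linarith
      _ ≤ sg * b ((f (k₁+1)).1) := hbinv (k₁+1)
    have hbne : b ((f (k₁+1)).1) ≠ 0 := by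
      intro h
      rw [h, mul_zero] at hb1
      nlinarith
    have hle := hsupp ((f (k₁+1)).1) (hfMem (k₁+1)) hbne
    have hge := hσinv (k₁+1)
    have h2 : ENNReal.ofReal (∑ j ∈ Finset.range (k₁+1), M (vv j/(4*K₂)))
        ≤ sigmaM M (fun n => (f (k₁+1)).1 n / K₂) := le_trans le_add_self hge
    have h3 : ENNReal.ofReal (∑ j ∈ Finset.range (k₁+1), M (vv j/(4*K₂)))
        ≤ ENNReal.ofReal (1/4) := h2.trans hle
    rw [ENNReal.ofReal_le_ofReal_iff (by norm_num)] at h3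
    linarith
  · -- gains stay below 1/2 : build the limit point and contradict near-maximality
    push_neg at hcross
    -- summability of the gains
    have hsum : Summable (fun j => M (vv j/(4*K₂))) :=
      summable_of_sum_range_le (c := 1/2) (fun n => (hδpos n).le)
        (fun n => hcross n)
    have htailsum : Tendsto (fun k => ∑' j, M (vv (j+k)/(4*K₂))) atTop (𝓝 0) :=
      tendsto_sum_nat_add (fun j => M (vv j/(4*K₂)))
    have hvv0 : ∀ ε > (0:ℝ), ∃ k₁, ∀ j ≥ k₁, vv j ≤ ε := by
      intro ε hε
      have hδ0 : Tendsto (fun j => M (vv j/(4*K₂))) atTop (𝓝 0) := hsum.tendsto_atTop_zero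
      have hMε : 0 < M (ε/(4*K₂)) := hnd _ (by positivity)
      have hev : ∀ᶠ j in atTop, M (vv j/(4*K₂)) < M (ε/(4*K₂)) := by
        apply hδ0.eventually_lt_const hMε
      obtain ⟨k₁, hk₁⟩ := hev.exists_forall_of_atTop
      refine ⟨k₁, fun j hj => ?_⟩
      have hlt := M_lt_imp hM (by positivity) (hk₁ j hj)
        (by have := hvvpos j; positivity)
      rw [div_lt_div_iff₀ (by positivity) (by positivity)] at hlt
      nlinarith [hlt]
    -- tail bounds at an arbitrary scale, via Δ₂
    have htailD : ∀ ρ ε : ℝ, 0 < ρ → 0 < ε → ∃ k₀, ∀ k ≥ k₀,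
        (∑' j, ENNReal.ofReal (M (vv (j+k)/ρ))) ≤ ENNReal.ofReal ε := by
      intro ρ ε hρ hε
      obtain ⟨J, hJ⟩ := pow_unbounded_of_one_lt (4*K₂/ρ) (by norm_num : (1:ℝ) < 2)
      have hcJ : (0:ℝ) < c^J := by positivity
      obtain ⟨k₁, hk₁⟩ := hvv0 (ρ * T₀) (by positivity)
      have hev : ∀ᶠ k in atTop, ∑' j, M (vv (j+k)/(4*K₂)) < ε * c^J := by
        apply htailsum.eventually_lt_const
        positivity
      obtain ⟨k₂, hk₂⟩ := hev.exists_forall_of_atTop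
      refine ⟨max k₁ k₂, fun k hk => ?_⟩
      have hk₁' : k₁ ≤ k := le_trans (le_max_left _ _) hk
      have hk₂' : k₂ ≤ k := le_trans (le_max_right _ _) hk
      have hptj : ∀ j, ENNReal.ofReal (M (vv (j+k)/ρ))
          ≤ ENNReal.ofReal (M (vv (j+k)/(4*K₂)) * (1/c^J)) := by
        intro j
        apply ENNReal.ofReal_le_ofReal
        have hvj := hvvpos (j+k)
        have hvsmall : vv (j+k) ≤ ρ * T₀ := hk₁ (j+k) (by omega)
        have ht0 : 0 < vv (j+k)/(ρ * 2^J) := by positivity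
        have h2Jt : (2:ℝ)^J * (vv (j+k)/(ρ*2^J)) = vv (j+k)/ρ := by
          field_simp
        have hcc := hchain J (vv (j+k)/(ρ*2^J)) ht0
          (by
            rw [h2Jt, div_le_iff₀ hρ]
            linarith [hvsmall])
        rw [h2Jt] at hcc
        have hmm : M (vv (j+k)/(ρ*2^J)) ≤ M (vv (j+k)/(4*K₂)) := by
          apply hmono (by positivity)
          have h4lt : 4*K₂ ≤ ρ * 2^J := by
            rw [div_lt_iff₀ hρ] at hJ
            linarith [hJ]
          exact div_le_div_of_nonneg_left hvj.le (by positivity) h4lt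
        have hcomb : c^J * M (vv (j+k)/ρ) ≤ M (vv (j+k)/(4*K₂)) := le_trans hcc hmm
        rw [mul_one_div, le_div_iff₀ hcJ]
        calc M (vv (j+k)/ρ) * c^J = c^J * M (vv (j+k)/ρ) := mul_comm _ _
        _ ≤ M (vv (j+k)/(4*K₂)) := hcomb
      calc ∑' j, ENNReal.ofReal (M (vv (j+k)/ρ))
          ≤ ∑' j, ENNReal.ofReal (M (vv (j+k)/(4*K₂)) * (1/c^J)) :=
            Summable.tsum_le_tsum hptj ENNReal.summable ENNReal.summable
      _ = ∑' j, (ENNReal.ofReal (M (vv (j+k)/(4*K₂))) * ENNReal.ofReal (1/c^J)) := by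
            apply tsum_congr
            intro j
            rw [ENNReal.ofReal_mul (hnn _ (by have := hvvpos (j+k); positivity))]
      _ = (∑' j, ENNReal.ofReal (M (vv (j+k)/(4*K₂)))) * ENNReal.ofReal (1/c^J) :=
            ENNReal.tsum_mul_right
      _ = ENNReal.ofReal (∑' j, M (vv (j+k)/(4*K₂))) * ENNReal.ofReal (1/c^J) := by
            rw [ENNReal.ofReal_tsum_of_nonneg
              (fun j => hnn _ (by have := hvvpos (j+k); positivity))
              ((summable_nat_add_iff k).2 hsum)]
      _ ≤ ENNReal.ofReal (ε * c^J) * ENNReal.ofReal (1/c^J) := by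
            apply mul_le_mul_left
            exact ENNReal.ofReal_le_ofReal (hk₂ k hk₂').le
      _ = ENNReal.ofReal ε := by
            rw [← ENNReal.ofReal_mul (by positivity)]
            congr 1
            field_simp
    -- the limit point
    set xs : ℕ → ℝ := fun n => (f (n+1)).1 n with hxsdef
    have hnnk_gt : ∀ j, j < nn j := by
      intro j
      have h1 := hnlb j
      have h2 := hmlb j
      omega
    have hxs_used : ∀ j, xs (nn j) = x₀ (nn j) + ss j * vv j := by
      intro j
      show (f (nn j + 1)).1 (nn j) = _
      exact hXfor j (nn j + 1) (by have := hnnk_gt j; omega)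
    have hxs_un : ∀ i, (∀ j, i ≠ nn j) → xs i = x₀ i :=
      fun i hi => hXeq (i+1) i (fun j _ => hi j)
    -- structure of xs - X k
    have hdiff_cases : ∀ k i, (xs i = (f k).1 i) ∨
        (∃ j, k ≤ j ∧ i = nn j ∧ (f k).1 i = x₀ i ∧ xs i = x₀ i + ss j * vv j) := by
      intro k i
      by_cases hi : ∃ j, i = nn j
      · obtain ⟨j₀, rfl⟩ := hi
        rcases le_or_gt k j₀ with hj | hj
        · right
          refine ⟨j₀, hj, rfl, ?_, hxs_used j₀⟩
          apply hXeq
          intro j' hj' he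
          exact absurd (hnn_inj _ _ he) (by omega)
        · left
          rw [hxs_used j₀, hXfor j₀ k hj]
      · push_neg at hi
        left
        rw [hxs_un i hi]
        rw [hXeq k i (fun j _ => hi j)]
    have hdiff_bdd : ∀ k i, |xs i - (f k).1 i| ≤ vmax := by
      intro k i
      rcases hdiff_cases k i with h | ⟨j, _, _, h1, h2⟩
      · rw [h]
        simp [hvmax.le]
      · rw [h2, h1]
        have h3 : x₀ i + ss j * vv j - x₀ i = ss j * vv j := by ring
        rw [h3, hssabs j]
        exact (hOK j).2.2.1
    have hdiffpt : ∀ (k : ℕ) (ρ : ℝ), 0 < ρ → ∀ i,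
        ENNReal.ofReal (M |(xs i - (f k).1 i)/ρ|)
          ≤ ∑' j, (if i = nn (j+k) then ENNReal.ofReal (M (vv (j+k)/ρ)) else 0) := by
      intro k ρ hρ i
      rcases hdiff_cases k i with h | ⟨j, hj, hi, h1, h2⟩
      · rw [h]
        simp [hM.map_zero]
      · have hd : (xs i - (f k).1 i)/ρ = ss j * vv j / ρ := by
          rw [h2, h1]
          ring
        rw [hd]
        have habs : |ss j * vv j / ρ| = vv j / ρ := by
          rw [abs_div, hssabs j, abs_of_pos hρ]
        rw [habs]
        have hje : j - k + k = j := Nat.sub_add_cancel hj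
        have hterm : (if i = nn ((j-k)+k) then ENNReal.ofReal (M (vv ((j-k)+k)/ρ)) else 0)
            = ENNReal.ofReal (M (vv j/ρ)) := by
          rw [hje, if_pos hi]
        calc ENNReal.ofReal (M (vv j/ρ))
            = (if i = nn ((j-k)+k) then ENNReal.ofReal (M (vv ((j-k)+k)/ρ)) else 0) :=
              hterm.symm
        _ ≤ _ := ENNReal.le_tsum (j-k)
    have hdiffσ : ∀ (k : ℕ) (ρ : ℝ), 0 < ρ →
        sigmaM M (fun i => (xs i - (f k).1 i)/ρ)
          ≤ ∑' j, ENNReal.ofReal (M (vv (j+k)/ρ)) := by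
      intro k ρ hρ
      calc sigmaM M (fun i => (xs i - (f k).1 i)/ρ)
          ≤ ∑' i, ∑' j, (if i = nn (j+k) then ENNReal.ofReal (M (vv (j+k)/ρ)) else 0) :=
            Summable.tsum_le_tsum (hdiffpt k ρ hρ) ENNReal.summable ENNReal.summable
      _ = ∑' j, ∑' i, (if i = nn (j+k) then ENNReal.ofReal (M (vv (j+k)/ρ)) else 0) :=
            ENNReal.tsum_comm
      _ = ∑' j, ENNReal.ofReal (M (vv (j+k)/ρ)) := by
            apply tsum_congr
            intro j
            exact tsum_ite_eq (nn (j+k)) _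
    have hdiffσ' : ∀ (k : ℕ) (ρ : ℝ), 0 < ρ →
        sigmaM M (fun i => ((f k).1 i - xs i)/ρ)
          ≤ ∑' j, ENNReal.ofReal (M (vv (j+k)/ρ)) := by
      intro k ρ hρ
      have heq : sigmaM M (fun i => ((f k).1 i - xs i)/ρ)
          = sigmaM M (fun i => (xs i - (f k).1 i)/ρ) := by
        unfold sigmaM
        apply tsum_congr
        intro i
        rw [abs_div, abs_div, abs_sub_comm]
      rw [heq]
      exact hdiffσ k ρ hρ
    have htailfin : ∀ k : ℕ, (∑' j, ENNReal.ofReal (M (vv (j+k)/(4*K₂)))) ≠ ⊤ := by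
      intro k
      rw [← ENNReal.ofReal_tsum_of_nonneg
        (fun j => hnn _ (by have := hvvpos (j+k); positivity))
        ((summable_nat_add_iff k).2 hsum)]
      exact ENNReal.ofReal_ne_top
    have hMemdiff2 : ∀ k, MemLM M (fun i => (f k).1 i - xs i) := by
      intro k
      constructor
      · refine ⟨vmax, fun i => ?_⟩
        rw [abs_sub_comm]
        exact hdiff_bdd k i
      · exact ⟨4*K₂, by positivity,
          ne_top_of_le_ne_top (htailfin k) (hdiffσ' k (4*K₂) (by positivity))⟩
    have hMemdiff : ∀ k, MemLM M (fun i => xs i - (f k).1 i) := by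
      intro k
      constructor
      · exact ⟨vmax, fun i => hdiff_bdd k i⟩
      · exact ⟨4*K₂, by positivity,
          ne_top_of_le_ne_top (htailfin k) (hdiffσ k (4*K₂) (by positivity))⟩
    have hMemxs : MemLM M xs := by
      have h1 : xs = x₀ + (fun i => xs i - (f 0).1 i) := by
        funext i
        rw [Pi.add_apply, hX0]
        ring
      rw [h1]
      exact memLM_add hmono hnn hx₀M (hMemdiff 0)
    have hluxtail : ∀ ρ : ℝ, 0 < ρ → ∃ k₀, ∀ k ≥ k₀,
        luxNorm M (fun i => (f k).1 i - xs i) ≤ ρ := by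
      intro ρ hρ
      obtain ⟨k₀, hk₀⟩ := htailD ρ 1 hρ one_pos
      refine ⟨k₀, fun k hk => ?_⟩
      apply luxNorm_le hρ
      calc sigmaM M (fun i => ((f k).1 i - xs i)/ρ)
          ≤ ∑' j, ENNReal.ofReal (M (vv (j+k)/ρ)) := hdiffσ' k ρ hρ
      _ ≤ ENNReal.ofReal 1 := hk₀ k hk
      _ = 1 := ENNReal.ofReal_one
    -- Taylor data at the limit point
    obtain ⟨hadds, hhoms, -, Cs, hCs, rs, hrs, htays⟩ := hpack xs hMemxs
    have hBs : (0:ℝ) < min vmax (s₀ * rs) / (4 * K₂) := by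
      have : (0:ℝ) < min vmax (s₀ * rs) := lt_min hvmax (by positivity)
      positivity
    obtain ⟨ws, hws0, hwsB, hwsG⟩ := hgood ((2*Cs+1) * ((4*K₂/s₀) ^ p) / β₀) _ hBs
    have hMws : 0 < M ws := hnd _ hws0
    set vs : ℝ := 4 * K₂ * ws with hvsdef
    have hvs0 : 0 < vs := by positivity
    have hvsmin : vs ≤ min vmax (s₀ * rs) := by
      rw [hvsdef]
      have h1 : ws ≤ min vmax (s₀ * rs) / (4 * K₂) := hwsB.le
      rw [le_div_iff₀ (by positivity : (0:ℝ) < 4*K₂)] at h1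
      linarith [h1]
    have hvsvmax : vs ≤ vmax := hvsmin.trans (min_le_left _ _)
    have hvsr : vs ≤ s₀ * rs := hvsmin.trans (min_le_right _ _)
    set ηs : ℝ := vs / s₀ with hηsdef
    have hηs0 : 0 < ηs := by positivity
    have hηsr : ηs ≤ rs := by
      rw [hηsdef, div_le_iff₀ hs₀]
      linarith [hvsr]
    have hws4 : vs / (4*K₂) = ws := by
      rw [hvsdef, mul_div_cancel_left₀ ws (by positivity : (4:ℝ)*K₂ ≠ 0)]
    obtain ⟨N, hN⟩ := memLM_tendsto hM hnd hx₀M (vs/4) (by positivity)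
    obtain ⟨k₃, hk₃⟩ := htailD ηs (1/2) hηs0 (by norm_num)
    obtain ⟨k₄, hk₄⟩ := hluxtail (min ηs rs) (lt_min hηs0 hrs)
    -- for all large k, the gain M ws is achievable from the state at time k
    have hbig : ∀ k, max k₃ k₄ ≤ k → M ws < 2 * M (vv k / (4*K₂)) := by
      intro k hk
      have hk₃' : k₃ ≤ k := le_trans (le_max_left _ _) hk
      have hk₄' : k₄ ≤ k := le_trans (le_max_right _ _) hk
      -- a fresh coordinate, never touched by the construction
      set kq := max N ((f k).2 + 1) with hkqdef
      set nb := (f kq).2 with hnbdef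
      have hkqnb : kq ≤ nb := by
        have := hmlb kq
        omega
      have hnbN : N ≤ nb := le_trans (le_max_left _ _) hkqnb
      have hnbm : (f k).2 + 1 ≤ nb := le_trans (le_max_right _ _) hkqnb
      have hXknb : (f k).1 nb = x₀ nb := hXeq k nb (fun j _ => hmn_ne kq j)
      have hxsnb : xs nb = x₀ nb := hxs_un nb (hmn_ne kq)
      have hx₀nb : |x₀ nb| ≤ vs/4 := hN nb hnbN
      set es : ℝ := b' xs (fun i => if i = nb then 1 else 0) with hesdef
      set sb : ℝ := if 0 ≤ sg * es then 1 else -1 with hsbdef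
      have hsb1 : sb = 1 ∨ sb = -1 := by
        by_cases h0 : 0 ≤ sg * es <;> simp [hsbdef, h0]
      have hsbabs : |sb * vs| = vs := by
        rcases hsb1 with h0 | h0 <;> rw [h0] <;> simp [abs_of_pos hvs0]
      set hh : ℕ → ℝ := fun i => if i = nb then sb * vs else 0 with hhhdef
      have hMemhh : MemLM M hh := memLM_single hM.map_zero nb (sb*vs)
      set h1 : ℕ → ℝ := fun i => (f k).1 i - xs i with hh1def
      have hMemh1 : MemLM M h1 := hMemdiff2 k
      have hlux1 : luxNorm M h1 ≤ min ηs rs := hk₄ k hk₄'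
      have hlux1r : luxNorm M h1 ≤ rs := le_trans hlux1 (min_le_right _ _)
      have hlux1η : luxNorm M h1 ≤ ηs := le_trans hlux1 (min_le_left _ _)
      have hMemh2 : MemLM M (h1 + hh) := memLM_add hmono hnn hMemh1 hMemhh
      have hh2nb : (h1 + hh) nb = sb * vs := by
        rw [Pi.add_apply]
        have e1 : h1 nb = 0 := by
          show (f k).1 nb - xs nb = 0
          rw [hXknb, hxsnb]
          ring
        have e2 : hh nb = sb * vs := by
          show (if nb = nb then sb * vs else 0) = sb * vs
          simp
        rw [e1, e2, zero_add]
      have hlux2 : luxNorm M (h1 + hh) ≤ ηs := by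
        apply luxNorm_le hηs0
        have hdc : sigmaM M (fun i => (h1 + hh) i / ηs)
            = ENNReal.ofReal (M |(h1+hh) nb / ηs|)
              + ∑' i, (if i = nb then 0 else ENNReal.ofReal (M |(h1+hh) i / ηs|)) :=
          sigma_decomp _ _
        rw [hdc]
        have hterm1 : ENNReal.ofReal (M |(h1+hh) nb / ηs|) ≤ ENNReal.ofReal (1/2) := by
          rw [hh2nb]
          have habs : |sb * vs / ηs| = s₀ := by
            rw [abs_div, hsbabs, abs_of_pos hηs0, hηsdef, div_div_eq_mul_div,
              mul_div_cancel_left₀ s₀ hvs0.ne']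
          rw [habs]
          exact ENNReal.ofReal_le_ofReal hs₀M
        have hterm2 : (∑' i, (if i = nb then 0 else ENNReal.ofReal (M |(h1+hh) i / ηs|)))
            ≤ ENNReal.ofReal (1/2) := by
          have hptoff : ∀ i, (if i = nb then 0 else ENNReal.ofReal (M |(h1+hh) i / ηs|))
              ≤ ENNReal.ofReal (M |((f k).1 i - xs i) / ηs|) := by
            intro i
            by_cases h0 : i = nb
            · rw [if_pos h0]
              exact zero_le
            · rw [if_neg h0]
              have e3 : (h1 + hh) i = (f k).1 i - xs i := by
                rw [Pi.add_apply]
                have e4 : hh i = 0 := by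
                  show (if i = nb then sb * vs else 0) = 0
                  rw [if_neg h0]
                rw [e4, add_zero]
              rw [e3]
          calc (∑' i, (if i = nb then 0 else ENNReal.ofReal (M |(h1+hh) i / ηs|)))
              ≤ ∑' i, ENNReal.ofReal (M |((f k).1 i - xs i)/ηs|) :=
                Summable.tsum_le_tsum hptoff ENNReal.summable ENNReal.summable
          _ = sigmaM M (fun i => ((f k).1 i - xs i)/ηs) := rfl
          _ ≤ ∑' j, ENNReal.ofReal (M (vv (j+k)/ηs)) := hdiffσ' k ηs hηs0
          _ ≤ ENNReal.ofReal (1/2) := hk₃ k hk₃'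
        calc ENNReal.ofReal (M |(h1+hh) nb / ηs|)
              + (∑' i, (if i = nb then 0 else ENNReal.ofReal (M |(h1+hh) i / ηs|)))
            ≤ ENNReal.ofReal (1/2) + ENNReal.ofReal (1/2) := add_le_add hterm1 hterm2
        _ = ENNReal.ofReal 1 := by
              rw [← ENNReal.ofReal_add (by norm_num) (by norm_num)]
              norm_num
        _ = 1 := ENNReal.ofReal_one
      have ht1 := htays h1 hMemh1 hlux1r
      have ht2 := htays (h1 + hh) hMemh2 (hlux2.trans hηsr)
      have hxs1 : xs + h1 = (f k).1 := by
        funext i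
        rw [Pi.add_apply]
        show xs i + ((f k).1 i - xs i) = (f k).1 i
        ring
      have hxs2 : xs + (h1 + hh) = (f k).1 + hh := by
        funext i
        rw [Pi.add_apply, Pi.add_apply, Pi.add_apply]
        show xs i + (((f k).1 i - xs i) + hh i) = (f k).1 i + hh i
        ring
      rw [hxs1] at ht1
      rw [hxs2] at ht2
      have hbadd : b' xs (h1 + hh) = b' xs h1 + b' xs hh := hadds h1 hh hMemh1 hMemhh
      have hhsmul : hh = (sb*vs) • (fun i => if i = nb then (1:ℝ) else 0) := by
        funext i
        by_cases h0 : i = nb <;> simp [hhhdef, h0]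
      have hbhh : b' xs hh = (sb*vs) * es := by
        rw [hhsmul, hesdef]
        exact hhoms (sb*vs) _ (memLM_single hM.map_zero nb 1)
      have hsgnh : 0 ≤ sg * b' xs hh := by
        rw [hbhh]
        have hre : sg * ((sb*vs) * es) = sb * (vs * (sg * es)) := by ring
        rw [hre]
        by_cases h0 : 0 ≤ sg * es
        · have hs' : sb = 1 := by simp [hsbdef, h0]
          rw [hs', one_mul]
          exact mul_nonneg hvs0.le h0
        · have hs' : sb = -1 := by simp [hsbdef, h0]
          rw [hs']
          push_neg at h0
          have hnp : vs * (sg * es) ≤ 0 :=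
            mul_nonpos_of_nonneg_of_nonpos hvs0.le h0.le
          linarith
      have hηsp : ηs ^ p = (4*K₂/s₀)^p * ws^p := by
        have heq4 : ηs = (4*K₂/s₀) * ws := by
          rw [hηsdef, hvsdef, div_mul_eq_mul_div]
        rw [heq4, Real.mul_rpow (by positivity) hws0.le]
      have hCs2 : Cs * luxNorm M h1 ^ p + Cs * luxNorm M (h1+hh) ^ p ≤ β₀ * M ws := by
        have hb1 : luxNorm M h1 ^ p ≤ ηs ^ p :=
          Real.rpow_le_rpow (luxNorm_nonneg _) hlux1η hp0.le
        have hb2 : luxNorm M (h1+hh) ^ p ≤ ηs ^ p :=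
          Real.rpow_le_rpow (luxNorm_nonneg _) hlux2 hp0.le
        have h5 : (0:ℝ) < (4*K₂/s₀)^p := Real.rpow_pos_of_pos (by positivity) p
        have h6 : (0:ℝ) < ws^p := Real.rpow_pos_of_pos hws0 p
        have key : 2 * Cs * ηs^p ≤ β₀ * M ws := by
          rw [hηsp]
          have h3 : β₀ * ((2*Cs+1) * ((4*K₂/s₀)^p) / β₀ * ws^p) ≤ β₀ * M ws :=
            mul_le_mul_of_nonneg_left hwsG hβ₀.le
          have h4 : β₀ * ((2*Cs+1) * ((4*K₂/s₀)^p) / β₀ * ws^p)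
              = (2*Cs+1) * ((4*K₂/s₀)^p) * ws^p := by
            rw [div_mul_eq_mul_div, mul_div_assoc', mul_div_cancel_left₀ _ hβ₀.ne']
          rw [h4] at h3
          have h7 : (0:ℝ) < (4*K₂/s₀)^p * ws^p := mul_pos h5 h6
          have h8 : 2*Cs*((4*K₂/s₀)^p * ws^p) ≤ (2*Cs+1)*((4*K₂/s₀)^p * ws^p) :=
            mul_le_mul_of_nonneg_right (by linarith) h7.le
          have h9 : (2*Cs+1)*((4*K₂/s₀)^p * ws^p) = (2*Cs+1)*((4*K₂/s₀)^p) * ws^p := by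
            ring
          linarith
        have h10 : Cs * luxNorm M h1 ^ p ≤ Cs * ηs^p :=
          mul_le_mul_of_nonneg_left hb1 hCs.le
        have h11 : Cs * luxNorm M (h1+hh) ^ p ≤ Cs * ηs^p :=
          mul_le_mul_of_nonneg_left hb2 hCs.le
        linarith [key]
      have habsg : |sg| = 1 := by rcases hsg with h0 | h0 <;> rw [h0] <;> norm_num
      have hstepb : -(β₀ * M (vs / (4 * K₂))) ≤
          sg * (b ((f k).1 + fun i => if i = nb then sb * vs else 0) - b (f k).1) := by
        rw [hws4]
        show -(β₀ * M ws) ≤ sg * (b ((f k).1 + hh) - b (f k).1)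
        have e2 : -(Cs * luxNorm M (h1+hh) ^ p)
            ≤ sg * (b ((f k).1 + hh) - b xs - b' xs (h1+hh)) := by
          have h8 : |sg * (b ((f k).1 + hh) - b xs - b' xs (h1+hh))|
              = |b ((f k).1 + hh) - b xs - b' xs (h1+hh)| := by
            rw [abs_mul, habsg, one_mul]
          have h9 := neg_abs_le (sg * (b ((f k).1 + hh) - b xs - b' xs (h1+hh)))
          rw [h8] at h9
          linarith [ht2]
        have e1 : sg * (b (f k).1 - b xs - b' xs h1) ≤ Cs * luxNorm M h1 ^ p := by
          have h8 : |sg * (b (f k).1 - b xs - b' xs h1)|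
              = |b (f k).1 - b xs - b' xs h1| := by
            rw [abs_mul, habsg, one_mul]
          have h9 := le_abs_self (sg * (b (f k).1 - b xs - b' xs h1))
          rw [h8] at h9
          linarith [ht1]
        have hcomb : sg * (b ((f k).1 + hh) - b (f k).1)
            = sg * (b ((f k).1 + hh) - b xs - b' xs (h1+hh))
              - sg * (b (f k).1 - b xs - b' xs h1) + sg * b' xs hh := by
          rw [hbadd]
          ring
        rw [hcomb]
        linarith [hCs2, hsgnh, e1, e2]
      have hmem : M ws ∈ StepSet M b sg β₀ K₂ vmax (f k).1 (f k).2 := by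
        refine ⟨nb, vs, sb, ⟨hnbm, hvs0, hvsvmax, hsb1, ?_, hstepb⟩, by rw [hws4]⟩
        rw [hXknb]
        exact hx₀nb
      exact hhalf k (M ws) hmem
    -- divergence of the gains : contradiction
    obtain ⟨L, hL⟩ := exists_nat_gt (1 / M ws)
    have hterm : ∀ j ∈ Finset.Ico (max k₃ k₄) (max k₃ k₄ + L), M ws / 2 ≤ M (vv j/(4*K₂)) := by
      intro j hj
      rw [Finset.mem_Ico] at hj
      have := hbig j hj.1
      linarith
    have hsum1 : (L : ℝ) * (M ws / 2)
        ≤ ∑ j ∈ Finset.Ico (max k₃ k₄) (max k₃ k₄ + L), M (vv j/(4*K₂)) := by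
      have hcard := Finset.card_nsmul_le_sum (Finset.Ico (max k₃ k₄) (max k₃ k₄ + L))
        (fun j => M (vv j/(4*K₂))) (M ws / 2) hterm
      rw [Nat.card_Ico] at hcard
      have hLL : max k₃ k₄ + L - max k₃ k₄ = L := by omega
      rw [hLL, nsmul_eq_mul] at hcard
      exact hcard
    have hsum2 : ∑ j ∈ Finset.Ico (max k₃ k₄) (max k₃ k₄ + L), M (vv j/(4*K₂))
        ≤ ∑ j ∈ Finset.range (max k₃ k₄ + L), M (vv j/(4*K₂)) := by
      rw [Finset.range_eq_Ico]
      apply Finset.sum_le_sum_of_subset_of_nonneg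
      · apply Finset.Ico_subset_Ico <;> omega
      · intro i _ _
        exact (hδpos i).le
    have hfin := hcross (max k₃ k₄ + L)
    have hL2 : 1/2 < (L:ℝ) * (M ws / 2) := by
      rw [div_lt_iff₀ hMws] at hL
      nlinarith
    linarith
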